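/- arXiv:0810.5706 — 2 statements merged into one kernel-verified Lean document; each statement's English description precedes it below -/
import Mathlib

section
/- Let F be a distribution function with upper endpoint x_F ∈ (0,∞] in the Gumbel max-domain of attraction with positive scaling function w, i.e. \bar F(t + x/w(t))/\bar F(t) → e^{−x} for all x ∈ ℝ as t ↑ x_F. Then for any β ∈ ℝ and any μ > 1, (u·w(u))^β · \bar F(μu)/\bar F(u) → 0 as u ↑ x_F (here x_F = ∞ for the case μu to make sense). -/
/-!
For `x ≥ 0` the Gumbel condition forces `w t < 2 w (t + x / w t)` for large `t`: otherwise, with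
`s = t + x / w t`, the point `s + 1 / w s` lies at or beyond `t + (x + 2) / w t`, so `F̄` there is
both `≈ e⁻¹ e⁻ˣ F̄(t)` and `≲ e⁻⁽ˣ⁺²⁾ F̄(t)`. Iterating `t ↦ t + x / w t` from `u` therefore moves
at most `x 2ᵏ / w u` in `k` steps, while each step multiplies `F̄` by less than `2⁻ⁿ` once
`e⁻ˣ < 2⁻ⁿ`. About `log₂ (u w u)` steps fit into `[u, m u]`, so `F̄(m u) / F̄(u) = O((u w u)⁻ⁿ)`
for every `n`. Finally `u w u → ∞`, because `F̄(u - L / w u) ≈ eᴸ F̄(u) → 0` forces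
`u - L / w u > 0`.
-/

open MeasureTheory ProbabilityTheory Filter Real Set Topology Asymptotics

def GumbelMDA (F w : ℝ → ℝ) : Prop :=
  ∀ x : ℝ, Tendsto (fun u => F (u + x / w u) / F u) atTop (𝓝 (exp (-x)))

noncomputable def scaleShift (w : ℝ → ℝ) (x t : ℝ) : ℝ := t + x / w t

theorem iterate_le_pow_mul_of_mapsTo {α : Type*} {g : α → α} {f : α → ℝ} {s : Set α} {c : ℝ}
    (hc : 0 ≤ c) (hg : MapsTo g s s) (hf : ∀ t ∈ s, f (g t) ≤ c * f t) {u : α} (hu : u ∈ s) :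
    ∀ k : ℕ, f (g^[k] u) ≤ c ^ k * f u
  | 0 => by simp
  | k + 1 => by
    rw [Function.iterate_succ_apply', pow_succ', mul_assoc]
    exact (hf _ (hg.iterate k hu)).trans
      (mul_le_mul_of_nonneg_left (iterate_le_pow_mul_of_mapsTo hc hg hf hu k) hc)

theorem exp_neg_add_one_lt_inv_two_pow (n : ℕ) : exp (-(n + 1)) < (2 ^ n)⁻¹ := by
  rw [exp_neg, inv_lt_inv₀ (exp_pos _) (by positivity)]
  calc (2 : ℝ) ^ n ≤ exp 1 ^ n := by gcongr; linarith [add_one_le_exp (1 : ℝ)]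
    _ = exp n := exp_one_pow n
    _ < exp (n + 1) := exp_lt_exp.2 (lt_add_one _)

section ScaleShift

variable {w : ℝ → ℝ} {x U : ℝ}

theorem mapsTo_scaleShift (hx : 0 ≤ x) (hw : ∀ t ≥ U, 0 < w t) :
    MapsTo (scaleShift w x) (Ici U) (Ici U) := fun t ht =>
  le_add_of_le_of_nonneg ht (div_nonneg hx (hw t ht).le)

theorem scaleShift_iterate_le (hx : 0 ≤ x) (hw : ∀ t ≥ U, 0 < w t)
    (hw2 : ∀ t ≥ U, w t < 2 * w (scaleShift w x t)) {u : ℝ} (hu : U ≤ u) (k : ℕ) :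
    (scaleShift w x)^[k] u ≤ u + x * (2 ^ k - 1) / w u := by
  have hinv : ∀ j : ℕ, (w ((scaleShift w x)^[j] u))⁻¹ ≤ 2 ^ j * (w u)⁻¹ := by
    refine iterate_le_pow_mul_of_mapsTo (f := fun t => (w t)⁻¹) zero_le_two
      (mapsTo_scaleShift hx hw) (fun t ht => ?_) hu
    have hwt := hw t ht
    have hwt' := hw _ (mapsTo_scaleShift hx hw ht)
    rw [inv_le_comm₀ hwt' (by positivity), mul_inv, inv_inv]
    linarith [hw2 t ht]
  induction k with
  | zero => simp
  | succ k ih =>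
    rw [Function.iterate_succ_apply']
    calc scaleShift w x ((scaleShift w x)^[k] u)
        = (scaleShift w x)^[k] u + x * (w ((scaleShift w x)^[k] u))⁻¹ := rfl
      _ ≤ u + x * (2 ^ k - 1) / w u + x * (2 ^ k * (w u)⁻¹) :=
          add_le_add ih (mul_le_mul_of_nonneg_left (hinv k) hx)
      _ = u + x * (2 ^ (k + 1) - 1) / w u := by ring

theorem apply_mul_le_pow_mul_of_scaleShift {F : ℝ → ℝ} {c u m : ℝ} {k : ℕ}
    (hF : Antitone F) (hx : 0 ≤ x) (hc : 0 ≤ c) (hw : ∀ t ≥ U, 0 < w t)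
    (hw2 : ∀ t ≥ U, w t < 2 * w (scaleShift w x t))
    (hFc : ∀ t ≥ U, F (scaleShift w x t) ≤ c * F t) (hu : U ≤ u)
    (hk : x * 2 ^ k ≤ (m - 1) * (u * w u)) :
    F (m * u) ≤ c ^ k * F u := by
  have hreach : (scaleShift w x)^[k] u ≤ m * u := by
    have hsteps : x * (2 ^ k - 1) / w u ≤ (m - 1) * u := by
      rw [div_le_iff₀ (hw u hu)]
      linarith
    linarith [scaleShift_iterate_le hx hw hw2 hu k]
  exact (hF hreach).trans (iterate_le_pow_mul_of_mapsTo hc (mapsTo_scaleShift hx hw) hFc hu k)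

theorem apply_mul_le_inv_pow_of_scaleShift {F : ℝ → ℝ} {u m : ℝ} {n : ℕ} (hF : Antitone F)
    (hFu : 0 ≤ F u) (hx : 0 < x) (hm : 1 < m) (hw : ∀ t ≥ U, 0 < w t)
    (hw2 : ∀ t ≥ U, w t < 2 * w (scaleShift w x t))
    (hFc : ∀ t ≥ U, F (scaleShift w x t) ≤ (2 ^ n)⁻¹ * F t) (hu : U ≤ u)
    (hS : x / (m - 1) ≤ u * w u) :
    F (m * u) ≤ (2 * x / (m - 1)) ^ n * ((u * w u) ^ n)⁻¹ * F u := by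
  have hm1 : 0 < m - 1 := sub_pos.2 hm
  set S := u * w u
  have hS0 : 0 < S := (div_pos hx hm1).trans_le hS
  have hy : 1 ≤ (m - 1) * S / x := by
    rwa [le_div_iff₀ hx, one_mul, ← div_le_iff₀' hm1]
  obtain ⟨k, hk, hk'⟩ := exists_nat_pow_near hy one_lt_two
  rw [le_div_iff₀ hx, mul_comm] at hk
  rw [div_lt_iff₀ hx, pow_succ] at hk'
  have hhalf : ((2 : ℝ) ^ k)⁻¹ ≤ 2 * x / (m - 1) / S := by
    rw [div_div, le_div_iff₀ (by positivity), inv_mul_eq_div, div_le_iff₀ (by positivity)]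
    linarith
  calc F (m * u) ≤ ((2 : ℝ) ^ n)⁻¹ ^ k * F u :=
        apply_mul_le_pow_mul_of_scaleShift hF hx.le (by positivity) hw hw2 hFc hu hk
    _ = ((2 : ℝ) ^ k)⁻¹ ^ n * F u := by
        rw [← inv_pow, ← inv_pow, ← pow_mul, ← pow_mul, mul_comm n k]
    _ ≤ (2 * x / (m - 1) / S) ^ n * F u :=
        mul_le_mul_of_nonneg_right (pow_le_pow_left₀ (by positivity) hhalf n) hFu
    _ = (2 * x / (m - 1)) ^ n * (S ^ n)⁻¹ * F u := by rw [div_pow, div_eq_mul_inv]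

end ScaleShift

section Gumbel

variable {F w : ℝ → ℝ}

theorem GumbelMDA.tendsto_mul_atTop (hG : GumbelMDA F w) (hF_pos : ∀ t, 0 < F t)
    (hF_one : ∀ s ≤ 0, F s = 1) (hF : Tendsto F atTop (𝓝 0)) (hw : ∀ᶠ u in atTop, 0 < w u) :
    Tendsto (fun u => u * w u) atTop atTop := by
  refine tendsto_atTop.2 fun L => ?_
  have hshift : Tendsto (fun u => F (u + -L / w u)) atTop (𝓝 0) := by
    simpa using ((hG (-L)).mul hF).congr fun u => div_mul_cancel₀ _ (hF_pos u).ne'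
  filter_upwards [hshift.eventually (eventually_lt_nhds zero_lt_one), hw] with u hu hwu
  have hpos : 0 < u + -L / w u := by
    by_contra! hle
    exact (hF_one _ hle).not_lt hu
  rw [neg_div, ← sub_eq_add_neg, sub_pos, div_lt_iff₀ hwu] at hpos
  exact hpos.le

theorem GumbelMDA.eventually_lt_two_mul_scaleShift (hG : GumbelMDA F w) (hF : Antitone F)
    (hF_pos : ∀ t, 0 < F t) (hw : ∀ᶠ t in atTop, 0 < w t) {x : ℝ} (hx : 0 ≤ x) :
    ∀ᶠ t in atTop, w t < 2 * w (scaleShift w x t) := by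
  set s := scaleShift w x
  have hs : Tendsto s atTop atTop :=
    tendsto_atTop_mono' _ (hw.mono fun t ht => le_add_of_nonneg_right (div_nonneg hx ht.le))
      tendsto_id
  have htwo : Tendsto (fun t => F (s t + 1 / w (s t)) / F t) atTop (𝓝 (exp (-1) * exp (-x))) :=
    (((hG 1).comp hs).mul (hG x)).congr fun t => div_mul_div_cancel₀ (hF_pos _).ne'
  have hlt : exp (-(x + 2)) < exp (-1) * exp (-x) := by
    rw [← exp_add]
    exact exp_lt_exp.2 (by linarith)
  filter_upwards [(hG (x + 2)).eventually_lt htwo hlt, hw, hs.eventually hw] with t ht hwt hwst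
  have hfar := hF.reflect_lt ((div_lt_div_iff_of_pos_right (hF_pos t)).1 ht)
  have : 1 / w (s t) < 2 / w t := by
    simp only [s, scaleShift] at hfar ⊢
    rw [add_div] at hfar
    linarith
  rwa [div_lt_div_iff₀ hwst hwt, one_mul] at this

theorem GumbelMDA.isBigO_tail_ratio (hG : GumbelMDA F w) (hF : Antitone F)
    (hF_pos : ∀ t, 0 < F t) (hw : ∀ᶠ t in atTop, 0 < w t)
    (hS : Tendsto (fun u => u * w u) atTop atTop) {m : ℝ} (hm : 1 < m) (n : ℕ) :
    (fun u => F (m * u) / F u) =O[atTop] fun u => ((u * w u) ^ n)⁻¹ := by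
  have hx : (0 : ℝ) < n + 1 := by positivity
  obtain ⟨U, hU⟩ := eventually_atTop.1 (hw.and
    ((hG.eventually_lt_two_mul_scaleShift hF hF_pos hw hx.le).and
      ((hG (n + 1)).eventually (eventually_lt_nhds (exp_neg_add_one_lt_inv_two_pow n)))))
  refine IsBigO.of_bound ((2 * (n + 1) / (m - 1)) ^ n) ?_
  filter_upwards [eventually_ge_atTop U, hS.eventually_ge_atTop ((n + 1) / (m - 1))]
    with u hu hSu
  have hS0 : 0 < u * w u := (div_pos hx (sub_pos.2 hm)).trans_le hSu
  rw [norm_of_nonneg (div_nonneg (hF_pos _).le (hF_pos _).le),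
    norm_of_nonneg (inv_nonneg.2 (pow_nonneg hS0.le n)), div_le_iff₀ (hF_pos u)]
  exact apply_mul_le_inv_pow_of_scaleShift hF (hF_pos u).le hx hm (fun t ht => (hU t ht).1)
    (fun t ht => (hU t ht).2.1) (fun t ht => ((div_lt_iff₀ (hF_pos t)).1 (hU t ht).2.2).le) hu hSu

end Gumbel

theorem tendsto_rpow_mul_inv_pow_atTop {β : ℝ} {n : ℕ} (h : β < n) :
    Tendsto (fun S : ℝ => S ^ β * (S ^ n)⁻¹) atTop (𝓝 0) := by
  refine (tendsto_rpow_neg_atTop (sub_pos.2 h)).congr' ?_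
  filter_upwards [eventually_gt_atTop 0] with S hS
  rw [← rpow_natCast, ← rpow_neg hS.le, ← rpow_add hS, neg_sub, sub_eq_add_neg]

section Tail

variable {μ : Measure ℝ}

theorem antitone_measure_Ioi_toReal [IsFiniteMeasure μ] :
    Antitone fun u => (μ (Ioi u)).toReal := fun _ _ hab =>
  ENNReal.toReal_mono (measure_ne_top μ _) (measure_mono (Ioi_subset_Ioi hab))

variable [IsProbabilityMeasure μ]

theorem measure_Ioi_toReal_eq_one_sub_cdf (u : ℝ) : (μ (Ioi u)).toReal = 1 - cdf μ u := by
  rw [cdf_eq_real, ← probReal_compl_eq_one_sub measurableSet_Iic, compl_Iic, measureReal_def]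

theorem tendsto_measure_Ioi_toReal_atTop :
    Tendsto (fun u => (μ (Ioi u)).toReal) atTop (𝓝 0) := by
  simpa only [measure_Ioi_toReal_eq_one_sub_cdf, sub_self] using (tendsto_cdf_atTop μ).const_sub 1

theorem measure_Ioi_toReal_eq_one (hsupp : μ (Iic 0) = 0) {s : ℝ} (hs : s ≤ 0) :
    (μ (Ioi s)).toReal = 1 := by
  rw [measure_Ioi_toReal_eq_one_sub_cdf, cdf_eq_real, measureReal_def,
    measure_mono_null (Iic_subset_Iic.2 hs) hsupp, ENNReal.toReal_zero, sub_zero]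

end Tail

/-- If `F` (on `(0,∞)`, infinite upper endpoint) is in the Gumbel
max-domain of attraction with positive scaling function `w`, then for any `β ∈ ℝ` and
`μ' > 1`, `(u w(u))^β * F̄(μ' u)/F̄(u) → 0` as `u → ∞`. -/
theorem stmt2
    (μ : Measure ℝ) [IsProbabilityMeasure μ] (hsupp : μ (Iic 0) = 0)
    (hend : ∀ s : ℝ, 0 < μ (Ioi s))
    (Fbar : ℝ → ℝ) (hFbar : ∀ u, Fbar u = (μ (Ioi u)).toReal)
    (w : ℝ → ℝ) (hw : ∀ u > (0 : ℝ), 0 < w u)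
    (hGumbel : ∀ x : ℝ,
      Tendsto (fun u => Fbar (u + x / w u) / Fbar u) atTop (nhds (Real.exp (-x))))
    (β m : ℝ) (hm : 1 < m) :
    Tendsto (fun u => (u * w u) ^ β * (Fbar (m * u) / Fbar u)) atTop (nhds 0) := by
  obtain rfl : Fbar = fun u => (μ (Ioi u)).toReal := funext hFbar
  have hG : GumbelMDA (fun u => (μ (Ioi u)).toReal) w := hGumbel
  have hF_pos : ∀ u, 0 < (μ (Ioi u)).toReal := fun u =>
    ENNReal.toReal_pos (hend u).ne' (measure_ne_top μ _)
  have hw' : ∀ᶠ u in atTop, 0 < w u := (eventually_gt_atTop 0).mono hw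
  have hS : Tendsto (fun u => u * w u) atTop atTop :=
    hG.tendsto_mul_atTop hF_pos (fun _ => measure_Ioi_toReal_eq_one hsupp)
      tendsto_measure_Ioi_toReal_atTop hw'
  obtain ⟨n, hn⟩ := exists_nat_gt β
  have hratio := hG.isBigO_tail_ratio antitone_measure_Ioi_toReal hF_pos hw' hS hm n
  exact ((isBigO_refl (fun u => (u * w u) ^ β) atTop).mul hratio).trans_tendsto
    ((tendsto_rpow_mul_inv_pow_atTop hn).comp hS)
end

section
/- Let F be a distribution function on (0,∞) with infinite upper endpoint in the Gumbel max-domain of attraction with scaling function w. Then for any α > 0, ∫_u^∞ (x² − u²)^α dF(x) = (1+o(1)) · Γ(α+1) · (2/(u·w(u)))^α · u^{2α} · \bar F(u) as u → ∞. -/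
/-!
Layer cake and the substitution `t = (2u / w(u)) y` write the ratio as
`Γ(α+1)⁻¹ ∫₀^∞ α y^(α-1) F̄(√(u² + 2uy/w(u))) / F̄(u) dy`. Since `u w(u) → ∞`,
`√(u² + 2uy/w(u)) = u + (y + o(1)) / w(u)`, so the integrand tends to `α y^(α-1) e^(-y)`, whose
integral is `Γ(α+1)`. Dominated convergence applies thanks to a Potter-type bound
`F̄(u + x/w(u)) ≤ C (1+x)^(-m) F̄(u)`: along `v ↦ v + 1/w(v)` the tail at least halves at each
step while `w` shrinks by at most a factor `B` close to `1`, so `n` steps cover a distance of order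
`Bⁿ` and reduce `F̄` by `2⁻ⁿ`.
-/

open MeasureTheory Filter Real Set Topology

theorem integral_rpow_sub_one_mul_eq_rpow {α : ℝ} (hα : 0 < α) (a : ℝ) :
    ∫ t in (0 : ℝ)..a, α * t ^ (α - 1) = a ^ α := by
  rw [intervalIntegral.integral_const_mul, integral_rpow (Or.inl (by linarith)),
    sub_add_cancel, zero_rpow hα.ne', sub_zero, mul_div_cancel₀ _ hα.ne']

theorem setOf_lt_sq_sub_sq_inter_Ioi {u t : ℝ} (hu : 0 ≤ u) (ht : 0 ≤ t) :
    {x | t < x ^ 2 - u ^ 2} ∩ Ioi u = Ioi √(u ^ 2 + t) := by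
  ext x
  simp only [mem_inter_iff, mem_Ioi, mem_ofPred_eq]
  have hu_le : u ≤ √(u ^ 2 + t) := le_sqrt_of_sq_le (by linarith)
  constructor
  · rintro ⟨htx, hux⟩
    exact (sqrt_lt' (hu.trans_lt hux)).2 (by linarith)
  · intro hx
    have hx0 : 0 < x := (hu.trans hu_le).trans_lt hx
    exact ⟨by linarith [(sqrt_lt' hx0).1 hx], hu_le.trans_lt hx⟩

theorem setIntegral_sq_sub_sq_rpow_eq {μ : Measure ℝ} [IsFiniteMeasure μ] {α u : ℝ}
    (hα : 0 < α) (hu : 0 ≤ u) :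
    ∫ x in Ioi u, (x ^ 2 - u ^ 2) ^ α ∂μ
      = ∫ t in Ioi 0, α * t ^ (α - 1) * μ.real (Ioi √(u ^ 2 + t)) := by
  have hnn : 0 ≤ᵐ[μ.restrict (Ioi u)] fun x => x ^ 2 - u ^ 2 :=
    (ae_restrict_iff' measurableSet_Ioi).2
      (ae_of_all _ fun x (hx : u < x) => by simp only [Pi.zero_apply]; nlinarith)
  have hlayer := lintegral_comp_eq_lintegral_meas_lt_mul (μ.restrict (Ioi u)) hnn
    (by fun_prop) (g := fun t => α * t ^ (α - 1))
    (fun t _ => (intervalIntegral.intervalIntegrable_rpow' (by linarith)).const_mul α)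
    ((ae_restrict_iff' measurableSet_Ioi).2 (ae_of_all _ fun t (ht : 0 < t) => by positivity))
  have hmeas : Measurable fun t => μ.real (Ioi √(u ^ 2 + t)) :=
    Antitone.measurable fun _ _ hst =>
      measureReal_mono (Ioi_subset_Ioi (sqrt_le_sqrt (by linarith)))
  rw [integral_eq_lintegral_of_nonneg_ae (hnn.mono fun x hx => rpow_nonneg hx α)
    (by fun_prop : Measurable fun x : ℝ => (x ^ 2 - u ^ 2) ^ α).aestronglyMeasurable,
    integral_eq_lintegral_of_nonneg_ae ((ae_restrict_iff' measurableSet_Ioi).2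
      (ae_of_all _ fun t (ht : 0 < t) => by positivity))
    (by fun_prop :
      Measurable fun t => α * t ^ (α - 1) * μ.real (Ioi √(u ^ 2 + t))).aestronglyMeasurable]
  congr 1
  simp only [integral_rpow_sub_one_mul_eq_rpow hα] at hlayer
  rw [hlayer]
  refine setLIntegral_congr_fun measurableSet_Ioi fun t (ht : 0 < t) => ?_
  rw [Measure.restrict_apply (measurableSet_lt measurable_const (by fun_prop)),
    setOf_lt_sq_sub_sq_inter_Ioi hu ht.le,
    ENNReal.ofReal_mul (by positivity : 0 ≤ α * t ^ (α - 1)), ofReal_measureReal, mul_comm]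

theorem setIntegral_Ioi_rpow_mul_comp_mul_left (G : ℝ → ℝ) {α c : ℝ} (hc : 0 < c) :
    ∫ t in Ioi 0, α * t ^ (α - 1) * G t
      = c ^ α * ∫ y in Ioi 0, α * y ^ (α - 1) * G (c * y) := by
  have hsub := integral_comp_mul_left_Ioi (fun t => α * t ^ (α - 1) * G t) 0 hc
  have hpull : ∫ y in Ioi 0, α * (c * y) ^ (α - 1) * G (c * y)
      = c ^ (α - 1) * ∫ y in Ioi 0, α * y ^ (α - 1) * G (c * y) := by
    rw [← integral_const_mul]
    refine setIntegral_congr_fun measurableSet_Ioi fun y (hy : 0 < y) => ?_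
    rw [mul_rpow hc.le hy.le]
    ring
  rw [hsub, mul_zero, smul_eq_mul, rpow_sub_one hc.ne'] at hpull
  field_simp at hpull
  linear_combination hpull

theorem tendsto_measureReal_Ioi_atTop (μ : Measure ℝ) [IsFiniteMeasure μ] :
    Tendsto (fun x => μ.real (Ioi x)) atTop (𝓝 0) := by
  have h := tendsto_measure_iInter_atTop (μ := μ) (s := Ioi)
    (fun _ => measurableSet_Ioi.nullMeasurableSet) (fun _ _ hab => Ioi_subset_Ioi hab)
    ⟨0, measure_ne_top μ _⟩
  have hempty : ⋂ x : ℝ, Ioi x = ∅ := iInter_eq_empty_iff.2 fun x => ⟨x, lt_irrefl x⟩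
  rw [hempty, measure_empty] at h
  exact (ENNReal.tendsto_toReal ENNReal.zero_ne_top).comp h

theorem integrableOn_rpow_div_one_add_sqrt_pow {a : ℝ} (ha : -1 < a) {m : ℕ}
    (hm : 2 * (a + 1) < m) : IntegrableOn (fun y : ℝ => y ^ a / (1 + √y) ^ m) (Ioi 0) := by
  have hmeas : AEStronglyMeasurable (fun y : ℝ => y ^ a / (1 + √y) ^ m) :=
    (by fun_prop : Measurable fun y : ℝ => y ^ a / (1 + √y) ^ m).aestronglyMeasurable
  rw [← Ioc_union_Ioi_eq_Ioi zero_le_one]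
  refine IntegrableOn.union ?_ ?_
  · have hint : IntegrableOn (fun y : ℝ => y ^ a) (Ioc 0 1) :=
      (intervalIntegrable_iff_integrableOn_Ioc_of_le zero_le_one).1
        (intervalIntegral.intervalIntegrable_rpow' ha)
    refine hint.mono' hmeas.restrict ((ae_restrict_iff' measurableSet_Ioc).2 (ae_of_all _ ?_))
    intro y hy
    have hya : 0 ≤ y ^ a := rpow_nonneg hy.1.le a
    rw [norm_of_nonneg (by positivity)]
    exact div_le_self hya (one_le_pow₀ (by linarith [sqrt_nonneg y]))
  · have hint : IntegrableOn (fun y : ℝ => y ^ (a - m / 2)) (Ioi 1) :=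
      integrableOn_Ioi_rpow_of_lt (by linarith) one_pos
    refine hint.mono' hmeas.restrict ((ae_restrict_iff' measurableSet_Ioi).2 (ae_of_all _ ?_))
    intro y hy
    have hy0 : 0 < y := zero_lt_one.trans hy
    have hsqrt : √y ^ m = y ^ ((m : ℝ) / 2) := by
      rw [sqrt_eq_rpow, ← rpow_natCast, ← rpow_mul hy0.le]
      ring_nf
    rw [norm_of_nonneg (by positivity), rpow_sub hy0, ← hsqrt]
    have := sqrt_pos.2 hy0
    gcongr
    linarith

theorem tendsto_setIntegral_rpow_mul_of_dominated {α : ℝ} (hα : 0 < α) {m : ℕ}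
    (hm : 2 * α < m) {g : ℝ → ℝ → ℝ} {C : ℝ}
    (hmeas : ∀ᶠ u in atTop, AEStronglyMeasurable (g u) (volume.restrict (Ioi 0)))
    (hbound : ∀ᶠ u in atTop, ∀ y > 0, |g u y| ≤ C / (1 + √y) ^ m)
    (hlim : ∀ y > 0, Tendsto (fun u => g u y) atTop (𝓝 (exp (-y)))) :
    Tendsto (fun u => ∫ y in Ioi 0, α * y ^ (α - 1) * g u y) atTop
      (𝓝 (Gamma (α + 1))) := by
  have hΓ : Gamma (α + 1) = ∫ y in Ioi 0, α * y ^ (α - 1) * exp (-y) := by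
    rw [Gamma_add_one hα.ne', Gamma_eq_integral hα, ← integral_const_mul]
    congr with y
    ring
  rw [hΓ]
  refine tendsto_integral_filter_of_dominated_convergence
    (fun y => α * C * (y ^ (α - 1) / (1 + √y) ^ m)) ?_ ?_ ?_ ?_
  · filter_upwards [hmeas] with u hu
    exact (by fun_prop : Measurable fun y : ℝ => α * y ^ (α - 1)).aestronglyMeasurable.mul hu
  · filter_upwards [hbound] with u hu
    refine (ae_restrict_iff' measurableSet_Ioi).2 (ae_of_all _ fun y hy => ?_)
    have hy' : 0 ≤ y ^ (α - 1) := rpow_nonneg (le_of_lt hy) _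
    rw [norm_mul, norm_of_nonneg (by positivity), Real.norm_eq_abs]
    calc α * y ^ (α - 1) * |g u y| ≤ α * y ^ (α - 1) * (C / (1 + √y) ^ m) := by
          gcongr; exact hu y hy
      _ = α * C * (y ^ (α - 1) / (1 + √y) ^ m) := by ring
  · exact (integrableOn_rpow_div_one_add_sqrt_pow (by linarith) (by linarith)).const_mul _
  · exact (ae_restrict_iff' measurableSet_Ioi).2
      (ae_of_all _ fun y hy => (hlim y hy).const_mul _)

noncomputable def sqrtExcess (t y : ℝ) : ℝ := 2 * y / (√(1 + 2 * y / t) + 1)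

theorem sqrtExcess_nonneg {t y : ℝ} (ht : 0 ≤ t) (hy : 0 ≤ y) : 0 ≤ sqrtExcess t y := by
  unfold sqrtExcess; positivity

theorem sqrt_sq_add_eq_add_sqrtExcess {u w y : ℝ} (hu : 0 < u) (hw : 0 < w) (hy : 0 ≤ y) :
    √(u ^ 2 + 2 * u / w * y) = u + sqrtExcess (u * w) y / w := by
  unfold sqrtExcess
  have hr : 0 ≤ 1 + 2 * y / (u * w) := by positivity
  set r := √(1 + 2 * y / (u * w))
  have hr2 : r ^ 2 * (u * w) = u * w + 2 * y := by
    rw [sq_sqrt hr]; field_simp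
  have hr0 : 0 ≤ r := sqrt_nonneg _
  have hsq : u ^ 2 + 2 * u / w * y = (u * r) ^ 2 := by
    rw [mul_pow, sq_sqrt hr]; field_simp
  rw [hsq, sqrt_sq (by positivity)]
  field_simp
  linear_combination hr2

theorem tendsto_sqrtExcess_atTop (y : ℝ) : Tendsto (fun t => sqrtExcess t y) atTop (𝓝 y) := by
  have h : Tendsto (fun t : ℝ => √(1 + 2 * y / t) + 1) atTop (𝓝 2) := by
    have := tendsto_const_nhds (x := (1 : ℝ)).add
      (tendsto_const_nhds (x := 2 * y).div_atTop tendsto_id)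
    simpa [one_add_one_eq_two] using ((continuous_sqrt.tendsto _).comp this).add_const 1
  have := (tendsto_const_nhds (x := 2 * y)).div h two_ne_zero
  rwa [mul_div_cancel_left₀ y two_ne_zero] at this

theorem one_add_sqrt_le_one_add_sqrtExcess {t y : ℝ} (ht : 2 ≤ t) (hy : 0 ≤ y) :
    (1 + √y) / 2 ≤ 1 + sqrtExcess t y := by
  have hs := sq_sqrt hy
  have hs0 := sqrt_nonneg y
  have hle : √(1 + 2 * y / t) ≤ 1 + √y := by
    have : 2 * y / t ≤ y := by rw [div_le_iff₀ (by linarith)]; nlinarith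
    rw [sqrt_le_left (by positivity)]
    nlinarith
  have hlow : 2 * y / (2 + √y) ≤ sqrtExcess t y :=
    div_le_div_of_nonneg_left (by positivity) (by positivity) (by linarith)
  have hmid : (1 + √y) / 2 ≤ 1 + 2 * y / (2 + √y) := by
    field_simp
    nlinarith
  linarith

theorem Antitone.le_pow_mul_of_step {F w : ℝ → ℝ} (hF : Antitone F) {a B q : ℝ} (hB : 1 < B)
    (hq : 0 ≤ q)
    (hstep : ∀ v ≥ a, 0 < w v ∧ w v ≤ B * w (v + 1 / w v) ∧ F (v + 1 / w v) ≤ q * F v)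
    (n : ℕ) : ∀ u ≥ a, F (u + (B ^ n - 1) / (B - 1) / w u) ≤ q ^ n * F u := by
  induction n with
  | zero => simp
  | succ n ih =>
    intro u hu
    obtain ⟨hwu, hwB, hFq⟩ := hstep u hu
    set v := u + 1 / w u
    have hv : a ≤ v := by linarith [one_div_pos.2 hwu]
    have hwv := (hstep v hv).1
    have hd : 0 ≤ (B ^ n - 1) / (B - 1) :=
      div_nonneg (sub_nonneg.2 (one_le_pow₀ hB.le)) (by linarith)
    have hle : v + (B ^ n - 1) / (B - 1) / w v ≤ u + (B ^ (n + 1) - 1) / (B - 1) / w u := by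
      have hsplit : u + (B ^ (n + 1) - 1) / (B - 1) / w u
          = v + B * ((B ^ n - 1) / (B - 1)) / w u := by
        simp only [v]
        field_simp [(show B - 1 ≠ 0 by linarith)]
        ring
      rw [hsplit, add_le_add_iff_left, div_le_div_iff₀ hwv hwu]
      nlinarith
    calc F (u + (B ^ (n + 1) - 1) / (B - 1) / w u)
        ≤ F (v + (B ^ n - 1) / (B - 1) / w v) := hF hle
      _ ≤ q ^ n * F v := ih v hv
      _ ≤ q ^ n * (q * F u) := mul_le_mul_of_nonneg_left hFq (pow_nonneg hq n)
      _ = q ^ (n + 1) * F u := by ring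

def IsGumbelScaling (F w : ℝ → ℝ) : Prop :=
  ∀ x : ℝ, Tendsto (fun u => F (u + x / w u) / F u) atTop (𝓝 (exp (-x)))

namespace IsGumbelScaling

variable {F w : ℝ → ℝ}

theorem pos (hG : IsGumbelScaling F w) (hF : Antitone F) (hF0 : Tendsto F atTop (𝓝 0))
    (u : ℝ) : 0 < F u := by
  obtain ⟨v, hv, huv⟩ :=
    ((hG 0).eventually_ne (exp_pos _).ne' |>.and (eventually_ge_atTop u)).exists
  simp only [zero_div, add_zero, ne_eq, div_eq_zero_iff, or_self] at hv
  exact (lt_of_le_of_ne (hF.le_of_tendsto hF0 v) (Ne.symm hv)).trans_le (hF huv)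

theorem eventually_scale_pos (hG : IsGumbelScaling F w) (hF : Antitone F)
    (hF0 : Tendsto F atTop (𝓝 0)) : ∀ᶠ u in atTop, 0 < w u := by
  filter_upwards [(hG 1).eventually_lt_const (exp_lt_one_iff.2 (by norm_num))] with u hu
  by_contra! hw
  have hle : F u ≤ F (u + 1 / w u) :=
    hF (by linarith [div_nonpos_of_nonneg_of_nonpos zero_le_one hw])
  exact hu.not_ge ((one_le_div (hG.pos hF hF0 u)).2 hle)

theorem tendsto_mul_scale_atTop (hG : IsGumbelScaling F w) (hF : Antitone F)
    (hF0 : Tendsto F atTop (𝓝 0)) : Tendsto (fun u => u * w u) atTop atTop := by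
  have hFpos := hG.pos hF hF0
  refine tendsto_atTop.2 fun b => ?_
  have hsmall : ∀ᶠ u in atTop, F u < F 0 / (exp b + 1) :=
    hF0.eventually_lt_const (by have := hFpos 0; positivity)
  filter_upwards [hG.eventually_scale_pos hF hF0, hsmall,
    (hG (-b)).eventually_lt_const (lt_add_one (exp (- -b)))] with u hw hFu hratio
  by_contra! hb
  have hneg : u + -b / w u ≤ 0 := by
    rw [neg_div, ← sub_eq_add_neg, sub_nonpos, le_div_iff₀ hw]
    exact hb.le
  rw [neg_neg, div_lt_iff₀ (hFpos u)] at hratio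
  rw [lt_div_iff₀ (by positivity)] at hFu
  linarith [hF hneg]

theorem eventually_scale_le_mul_scale_shift (hG : IsGumbelScaling F w) (hF : Antitone F)
    (hF0 : Tendsto F atTop (𝓝 0)) {B : ℝ} (hB : 1 < B) :
    ∀ᶠ v in atTop, w v ≤ B * w (v + 1 / w v) := by
  have hFpos := hG.pos hF hF0
  have hw := hG.eventually_scale_pos hF hF0
  have hshift : Tendsto (fun v => v + 1 / w v) atTop atTop :=
    tendsto_atTop_mono' _ (hw.mono fun v hv => by simp only [id]; linarith [one_div_pos.2 hv])
      tendsto_id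
  -- two steps of lengths `1` and `B⁻¹` decay by more than the single step of length `2`
  have hlt : exp (-2) < exp (-B⁻¹) * exp (-1) := by
    rw [← exp_add]
    exact exp_lt_exp.2 (by linarith [inv_lt_one_of_one_lt₀ hB])
  filter_upwards [(hG 2).eventually_lt (((hG B⁻¹).comp hshift).mul (hG 1)) hlt, hw,
    hshift.eventually hw] with v hlim hwv hwv'
  set v' := v + 1 / w v
  by_contra! hbad
  have hstep : v + 2 / w v ≤ v' + B⁻¹ / w v' := by
    have : 1 / w v ≤ 1 / (B * w v') := one_div_le_one_div_of_le (by positivity) hbad.le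
    simp only [v', div_mul_eq_div_div, one_div] at this ⊢
    linarith [show 2 / w v = 2 * (w v)⁻¹ by ring]
  have hcancel : F (v' + B⁻¹ / w v') / F v' * (F v' / F v) = F (v' + B⁻¹ / w v') / F v := by
    field_simp [(hFpos v').ne']
  simp only [Function.comp, v'] at hlim hcancel
  rw [hcancel] at hlim
  exact hlim.not_ge (div_le_div_of_nonneg_right (hF hstep) (hFpos v).le)

theorem exists_one_add_pow_mul_le (hG : IsGumbelScaling F w) (hF : Antitone F)
    (hF0 : Tendsto F atTop (𝓝 0)) (m : ℕ) :
    ∃ C u₀ : ℝ, ∀ u ≥ u₀, ∀ x ≥ 0, (1 + x) ^ m * F (u + x / w u) ≤ C * F u := by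
  obtain ⟨B, ⟨hB2, hBm⟩, hB1⟩ : ∃ B : ℝ, (B ≤ 2 ∧ B ^ m ≤ 2) ∧ 1 < B := by
    have hB2 : ∀ᶠ B : ℝ in 𝓝 1, B ≤ 2 := eventually_le_nhds one_lt_two
    have hBm : ∀ᶠ B : ℝ in 𝓝 1, B ^ m ≤ 2 :=
      ((continuous_pow m).tendsto' 1 1 (one_pow m)).eventually (eventually_le_nhds one_lt_two)
    exact (((hB2.and hBm).filter_mono nhdsWithin_le_nhds).and
      (self_mem_nhdsWithin : Ioi (1 : ℝ) ∈ 𝓝[>] 1)).exists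
  have hq : exp (-1) < 1 / 2 := by
    rw [exp_neg, one_div]
    exact inv_strictAnti₀ two_pos (by linarith [exp_one_gt_d9])
  obtain ⟨a, ha⟩ := eventually_atTop.1 ((hG.eventually_scale_pos hF hF0).and
    ((hG.eventually_scale_le_mul_scale_shift hF hF0 hB1).and ((hG 1).eventually_le_const hq)))
  have hstep :
      ∀ v ≥ a, 0 < w v ∧ w v ≤ B * w (v + 1 / w v) ∧ F (v + 1 / w v) ≤ 1 / 2 * F v :=
    fun v hv => ⟨(ha v hv).1, (ha v hv).2.1, (div_le_iff₀ (hG.pos hF hF0 v)).1 (ha v hv).2.2⟩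
  refine ⟨2 / (B - 1) ^ m, a, fun u hu x hx => ?_⟩
  have hB0 : 0 < B - 1 := by linarith
  obtain ⟨n, hn_le, hn_lt⟩ := exists_nat_pow_near (by nlinarith : 1 ≤ 1 + (B - 1) * x) hB1
  have hFx : F (u + x / w u) ≤ (1 / 2) ^ n * F u := by
    refine le_trans (hF ?_) (hF.le_pow_mul_of_step hB1 (by norm_num) hstep n u hu)
    have hwu := (hstep u hu).1
    gcongr
    rw [div_le_iff₀ hB0]
    linarith
  have hpow : (B - 1) ^ m * (1 + x) ^ m ≤ 2 ^ (n + 1) := by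
    calc (B - 1) ^ m * (1 + x) ^ m = ((B - 1) * (1 + x)) ^ m := (mul_pow _ _ _).symm
      _ ≤ (B ^ (n + 1)) ^ m := by gcongr; nlinarith
      _ = (B ^ m) ^ (n + 1) := by ring
      _ ≤ 2 ^ (n + 1) := by gcongr
  calc (1 + x) ^ m * F (u + x / w u) ≤ (1 + x) ^ m * ((1 / 2) ^ n * F u) := by gcongr
    _ ≤ 2 ^ (n + 1) / (B - 1) ^ m * ((1 / 2) ^ n * F u) := by
      have := hG.pos hF hF0 u
      gcongr
      rw [le_div_iff₀ (by positivity)]; linarith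
    _ = 2 / (B - 1) ^ m * F u := by rw [pow_succ, one_div_pow]; field_simp

theorem tendsto_of_tendsto (hG : IsGumbelScaling F w) (hF : Antitone F)
    (hF0 : Tendsto F atTop (𝓝 0)) {x : ℝ → ℝ} {y : ℝ} (hx : Tendsto x atTop (𝓝 y)) :
    Tendsto (fun u => F (u + x u / w u) / F u) atTop (𝓝 (exp (-y))) := by
  have hFpos := hG.pos hF hF0
  have hexp : Continuous fun z : ℝ => exp (-z) := by fun_prop
  rw [tendsto_order]
  constructor
  · intro b hb
    obtain ⟨z, hbz, hyz⟩ := (((hexp.tendsto y).eventually (lt_mem_nhds hb)).filter_mono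
      nhdsWithin_le_nhds |>.and (self_mem_nhdsWithin : Ioi y ∈ 𝓝[>] y)).exists
    filter_upwards [(hG z).eventually (lt_mem_nhds hbz), hx.eventually (gt_mem_nhds hyz),
      hG.eventually_scale_pos hF hF0] with u hz hxu hwu
    exact hz.trans_le (div_le_div_of_nonneg_right (hF (by gcongr)) (hFpos u).le)
  · intro b hb
    obtain ⟨z, hbz, hyz⟩ := (((hexp.tendsto y).eventually (gt_mem_nhds hb)).filter_mono
      nhdsWithin_le_nhds |>.and (self_mem_nhdsWithin : Iio y ∈ 𝓝[<] y)).exists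
    filter_upwards [(hG z).eventually (gt_mem_nhds hbz), hx.eventually (lt_mem_nhds hyz),
      hG.eventually_scale_pos hF hF0] with u hz hxu hwu
    exact (div_le_div_of_nonneg_right (hF (by gcongr)) (hFpos u).le).trans_lt hz

theorem tendsto_setIntegral_rpow_mul (hG : IsGumbelScaling F w) (hF : Antitone F)
    (hF0 : Tendsto F atTop (𝓝 0)) {α : ℝ} (hα : 0 < α) :
    Tendsto (fun u => ∫ y in Ioi 0, α * y ^ (α - 1) * (F √(u ^ 2 + 2 * u / w u * y) / F u))
      atTop (𝓝 (Gamma (α + 1))) := by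
  have hFpos := hG.pos hF hF0
  have huw := hG.tendsto_mul_scale_atTop hF hF0
  have hrepr : ∀ᶠ u in atTop, ∀ y ≥ 0,
      F √(u ^ 2 + 2 * u / w u * y) = F (u + sqrtExcess (u * w u) y / w u) := by
    filter_upwards [eventually_gt_atTop 0, hG.eventually_scale_pos hF hF0] with u hu hwu y hy
    rw [sqrt_sq_add_eq_add_sqrtExcess hu hwu hy]
  obtain ⟨m, hm⟩ := exists_nat_gt (2 * α)
  obtain ⟨C, u₀, hC⟩ := hG.exists_one_add_pow_mul_le hF hF0 m
  refine tendsto_setIntegral_rpow_mul_of_dominated hα hm (C := 2 ^ m * C) ?_ ?_ ?_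
  · exact Eventually.of_forall fun u =>
      ((hF.measurable.comp (by fun_prop)).div_const _).aestronglyMeasurable
  · filter_upwards [hrepr, eventually_ge_atTop u₀, eventually_gt_atTop 0,
      huw.eventually_ge_atTop 2] with u hrepr hu hu0 huw2 y hy
    have hx : 0 ≤ sqrtExcess (u * w u) y := sqrtExcess_nonneg (by linarith) hy.le
    have hsqrt := one_add_sqrt_le_one_add_sqrtExcess huw2 hy.le
    rw [hrepr y hy.le, abs_of_nonneg (div_nonneg (hF.le_of_tendsto hF0 _) (hFpos u).le),
      div_le_div_iff₀ (hFpos u) (by positivity)]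
    calc F (u + sqrtExcess (u * w u) y / w u) * (1 + √y) ^ m
        = 2 ^ m * (((1 + √y) / 2) ^ m * F (u + sqrtExcess (u * w u) y / w u)) := by
          rw [div_pow]; field_simp
      _ ≤ 2 ^ m * ((1 + sqrtExcess (u * w u) y) ^ m * F (u + sqrtExcess (u * w u) y / w u)) := by
          have := hF.le_of_tendsto hF0 (u + sqrtExcess (u * w u) y / w u)
          gcongr
      _ ≤ 2 ^ m * (C * F u) := mul_le_mul_of_nonneg_left (hC u hu _ hx) (by positivity)
      _ = 2 ^ m * C * F u := by ring
  · intro y hy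
    refine (hG.tendsto_of_tendsto hF hF0 ((tendsto_sqrtExcess_atTop y).comp huw)).congr' ?_
    filter_upwards [hrepr] with u hu
    rw [hu y hy.le]
    rfl

end IsGumbelScaling

theorem stmt3_general
    (μ : Measure ℝ) [IsProbabilityMeasure μ]
    (Fbar : ℝ → ℝ) (hFbar : ∀ u, Fbar u = (μ (Ioi u)).toReal)
    (w : ℝ → ℝ)
    (hGumbel : ∀ x : ℝ,
      Tendsto (fun u => Fbar (u + x / w u) / Fbar u) atTop (nhds (Real.exp (-x))))
    (α : ℝ) (hα : 0 < α) :
    Tendsto (fun u =>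
        (∫ x in Ioi u, (x ^ 2 - u ^ 2) ^ α ∂μ) /
          (Real.Gamma (α + 1) * (2 / (u * w u)) ^ α * u ^ (2 * α) * Fbar u))
      atTop (nhds 1) := by
  obtain rfl : Fbar = fun u => μ.real (Ioi u) := funext hFbar
  have hF : Antitone fun u => μ.real (Ioi u) := fun _ _ hab =>
    measureReal_mono (Ioi_subset_Ioi hab)
  have hF0 := tendsto_measureReal_Ioi_atTop μ
  have hG : IsGumbelScaling (fun u => μ.real (Ioi u)) w := hGumbel
  have hΓ : Gamma (α + 1) ≠ 0 := (Gamma_pos_of_pos (by linarith)).ne'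
  have hlim := (hG.tendsto_setIntegral_rpow_mul hF hF0 hα).div_const (Gamma (α + 1))
  rw [div_self hΓ] at hlim
  refine hlim.congr' ?_
  filter_upwards [eventually_gt_atTop 0, hG.eventually_scale_pos hF hF0] with u hu hwu
  have hscale : (2 / (u * w u)) ^ α * u ^ (2 * α) = (2 * u / w u) ^ α := by
    rw [rpow_mul hu.le, rpow_two, ← mul_rpow (by positivity) (by positivity)]
    congr 1
    field_simp
  have hFu := hG.pos hF hF0 u
  have hnum : ∫ x in Ioi u, (x ^ 2 - u ^ 2) ^ α ∂μ = (2 * u / w u) ^ α *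
      ∫ y in Ioi 0, α * y ^ (α - 1) * μ.real (Ioi √(u ^ 2 + 2 * u / w u * y)) := by
    rw [setIntegral_sq_sub_sq_rpow_eq hα hu.le]
    exact setIntegral_Ioi_rpow_mul_comp_mul_left (fun t => μ.real (Ioi √(u ^ 2 + t)))
      (by positivity)
  simp_rw [← mul_div_assoc]
  rw [integral_div, hnum, mul_assoc _ ((2 / (u * w u)) ^ α), hscale]
  field_simp

/-- If `F` (on `(0,∞)`, infinite upper endpoint) is in the Gumbel
max-domain of attraction with scaling function `w`, then for any `α > 0`,
`∫_u^∞ (x² - u²)^α dF(x) = (1+o(1)) Γ(α+1) (2/(u w(u)))^α u^{2α} F̄(u)` as `u → ∞`. -/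
theorem stmt3
    (μ : Measure ℝ) [IsProbabilityMeasure μ] (hsupp : μ (Iic 0) = 0)
    (hend : ∀ s : ℝ, 0 < μ (Ioi s))
    (Fbar : ℝ → ℝ) (hFbar : ∀ u, Fbar u = (μ (Ioi u)).toReal)
    (w : ℝ → ℝ) (hw : ∀ u > (0 : ℝ), 0 < w u)
    (hGumbel : ∀ x : ℝ,
      Tendsto (fun u => Fbar (u + x / w u) / Fbar u) atTop (nhds (Real.exp (-x))))
    (α : ℝ) (hα : 0 < α) :
    Tendsto (fun u =>
        (∫ x in Ioi u, (x ^ 2 - u ^ 2) ^ α ∂μ) /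
          (Real.Gamma (α + 1) * (2 / (u * w u)) ^ α * u ^ (2 * α) * Fbar u))
      atTop (nhds 1) :=
  stmt3_general μ Fbar hFbar w hGumbel α hα
end
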